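/- For every real α with 0 < α ≤ 1/2 there exist a constant C > 0 and an integer K such that for all integers k ≥ K and n ≥ 4·k⁶, there exists an (n,k,α)-universal set of size at most (1/α)^k · k^{C·k^{5/6}} · log n. -/

import Mathlib

open Finset

/-- An `(n,k,α)`-universal set: every function maps exactly `⌈α·n⌉` elements to `1`,
and for all disjoint `S₀, S₁ ⊆ [n]` with `|S₀| + |S₁| = k` some function maps all of
`S₀` to `0` and all of `S₁` to `1`. -/
def IsUniversalSet (n k : ℕ) (α : ℝ) (F : Finset (Fin n → Fin 2)) : Prop :=
  (∀ f ∈ F, (Finset.univ.filter fun x => f x = 1).card = ⌈α * (n : ℝ)⌉₊) ∧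
  ∀ S₀ S₁ : Finset (Fin n), Disjoint S₀ S₁ → S₀.card + S₁.card = k →
    ∃ f ∈ F, (∀ x ∈ S₀, f x = 0) ∧ ∀ x ∈ S₁, f x = 1

/-!
Pick `m` subsets of `[n]` of size `t = ⌈α n⌉`. For a `k`-set `S` and `S₁ ⊆ S`, the proportion
of `t`-sets `R` with `R ∩ S = S₁` is `C(n - k, t - |S₁|) / C(n, t)`. The falling-factorial
identity `C(n, t) · t^(a) · (n - t)^(b) = n^(a + b) · C(n - a - b, t - a)` bounds it below by
`(α n - k)^k / n^k`, which is at least `α^k / 2` once `α n ≥ 2 k²`. There are at most `(2 n)^k`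
pairs `(S, S₁)`, so by the union bound some `m` such sets realise all of them as soon as
`(2 n)^k (1 - α^k / 2)^m < 1`, which holds for `m = ⌈4 k log n / α^k⌉ ≤ 5 k α^(-k) log n`.
-/

open scoped Nat

theorem Nat.choose_mul_descFactorial_mul_descFactorial {n t a b : ℕ} (ha : a ≤ t)
    (hb : t + b ≤ n) :
    n.choose t * t.descFactorial a * (n - t).descFactorial b =
      n.descFactorial (a + b) * (n - (a + b)).choose (t - a) := by
  have hrest : n - (a + b) - (t - a) = n - t - b := by omega
  refine Nat.eq_of_mul_eq_mul_right (by positivity : 0 < (t - a)! * (n - t - b)!) ?_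
  calc n.choose t * t.descFactorial a * (n - t).descFactorial b * ((t - a)! * (n - t - b)!)
      = n.choose t * ((t - a)! * t.descFactorial a) *
          ((n - t - b)! * (n - t).descFactorial b) := by ring
    _ = n ! := by
        rw [Nat.factorial_mul_descFactorial ha, Nat.factorial_mul_descFactorial (by omega),
          Nat.choose_mul_factorial_mul_factorial (by omega)]
    _ = n.descFactorial (a + b) * (n - (a + b)).choose (t - a) * ((t - a)! * (n - t - b)!) := by
        rw [← hrest, mul_assoc, ← mul_assoc _ (t - a)!,
          Nat.choose_mul_factorial_mul_factorial (by omega), mul_comm,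
          Nat.factorial_mul_descFactorial (by omega)]

theorem half_pow_le_sub_pow {x : ℝ} {k : ℕ} (h : 2 * k ^ 2 ≤ x) :
    x ^ k / 2 ≤ (x - k) ^ k := by
  rcases Nat.eq_zero_or_pos k with rfl | hk
  · norm_num
  have hk1 : (1 : ℝ) ≤ k := by exact_mod_cast hk
  have hx : 0 < x := by nlinarith
  have hkx : k * (k / x) ≤ 1 / 2 := by
    rw [← mul_div_assoc, div_le_iff₀ hx]; nlinarith
  have hbernoulli := one_add_mul_le_pow (a := -(k / x))
    (by nlinarith [div_pos (by linarith : (0 : ℝ) < k) hx]) k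
  calc x ^ k / 2 ≤ x ^ k * (1 + k * -(k / x)) := by nlinarith [pow_pos hx k]
    _ ≤ x ^ k * (1 + -(k / x)) ^ k := by gcongr
    _ = (x - k) ^ k := by rw [← mul_pow]; field_simp; ring

theorem pow_div_two_mul_choose_le {x : ℝ} {n t k a : ℕ} (hak : a ≤ k) (hx : 2 * k ^ 2 ≤ x)
    (hxt : x ≤ t) (hxn : x ≤ n - t + 1) :
    x ^ k / 2 * n.choose t ≤ n ^ k * (n - k).choose (t - a) := by
  rcases Nat.eq_zero_or_pos k with rfl | hk
  · obtain rfl : a = 0 := by omega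
    simp only [pow_zero, Nat.sub_zero]
    linarith [(Nat.cast_nonneg (n.choose t) : (0 : ℝ) ≤ _)]
  set b := k - a
  have hk1 : (1 : ℝ) ≤ k := by exact_mod_cast hk
  have hkx : (k : ℝ) ≤ x - k := by nlinarith
  have hkt : k ≤ t := by exact_mod_cast (by linarith : (k : ℝ) ≤ t)
  have hkn : t + k ≤ n := by exact_mod_cast (by linarith : (t : ℝ) + k ≤ n)
  have hak' : (a : ℝ) ≤ k := by exact_mod_cast hak
  have hbk : (b : ℝ) ≤ k := by exact_mod_cast Nat.sub_le k a
  have hfirst : (x - k) ^ a ≤ t.descFactorial a := by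
    calc (x - k) ^ a ≤ ((t + 1 - a : ℕ) : ℝ) ^ a := by
          gcongr
          · linarith
          · push_cast [show a ≤ t + 1 by omega]; linarith
      _ ≤ t.descFactorial a := by exact_mod_cast Nat.pow_sub_le_descFactorial t a
  have hsecond : (x - k) ^ b ≤ (n - t).descFactorial b := by
    calc (x - k) ^ b ≤ ((n - t + 1 - b : ℕ) : ℝ) ^ b := by
          gcongr
          · linarith
          · push_cast [show b ≤ n - t + 1 by omega, show t ≤ n by omega]; linarith
      _ ≤ (n - t).descFactorial b := by exact_mod_cast Nat.pow_sub_le_descFactorial (n - t) b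
  have hidentity : (n.choose t * t.descFactorial a * (n - t).descFactorial b : ℝ) =
      n.descFactorial k * (n - k).choose (t - a) := by
    have := Nat.choose_mul_descFactorial_mul_descFactorial (show a ≤ t by omega)
      (show t + b ≤ n by omega)
    rw [Nat.add_sub_cancel' hak] at this
    exact_mod_cast this
  calc x ^ k / 2 * n.choose t ≤ (x - k) ^ a * (x - k) ^ b * n.choose t := by
        rw [← pow_add, Nat.add_sub_cancel' hak]; gcongr; exact half_pow_le_sub_pow hx
    _ ≤ t.descFactorial a * (n - t).descFactorial b * n.choose t := by
        have : 0 ≤ x - k := by linarith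
        gcongr
    _ = n.descFactorial k * (n - k).choose (t - a) := by rw [← hidentity]; ring
    _ ≤ n ^ k * (n - k).choose (t - a) := by
        gcongr; exact_mod_cast Nat.descFactorial_le_pow n k

theorem pow_div_two_mul_choose_ceil_le {α : ℝ} (hα : α ≤ 1 / 2) {n k a : ℕ} (hak : a ≤ k)
    (hk : 2 * k ^ 2 ≤ α * n) :
    α ^ k / 2 * n.choose ⌈α * n⌉₊ ≤ (n - k).choose (⌈α * n⌉₊ - a) := by
  have hceil := Nat.ceil_lt_add_one (le_trans (by positivity) hk : 0 ≤ α * n)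
  have hnk : (0 : ℝ) < (n : ℝ) ^ k := by
    rcases Nat.eq_zero_or_pos k with rfl | hk0
    · simp
    · have : (1 : ℝ) ≤ k := by exact_mod_cast hk0
      have : (0 : ℝ) < n := by
        by_contra! hn
        nlinarith
      positivity
  have := pow_div_two_mul_choose_le (n := n) hak hk (Nat.le_ceil _) (by nlinarith)
  rw [mul_pow] at this
  refine le_of_mul_le_mul_left ?_ hnk
  linarith

theorem card_filter_powersetCard_inter_eq {V : Type*} [Fintype V] [DecidableEq V]
    {S S₁ : Finset V} (hS₁ : S₁ ⊆ S) {t : ℕ} (ht : #S₁ ≤ t) :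
    #{R ∈ powersetCard t (univ : Finset V) | R ∩ S = S₁} =
      (Fintype.card V - #S).choose (t - #S₁) := by
  have hfilter : {R ∈ powersetCard t (univ : Finset V) | R ∩ S = S₁} =
      {R ∈ powersetCard t (S \ S₁)ᶜ | S₁ ⊆ R} := by
    ext R
    simp only [mem_filter, mem_powersetCard, Finset.ext_iff, subset_iff, mem_inter, mem_compl,
      mem_sdiff]
    grind
  have hS₁c : S₁ ⊆ (S \ S₁)ᶜ := by
    simp [subset_compl_iff_disjoint_right, disjoint_sdiff_self_right]
  rw [hfilter, card_filter_powersetCard_subset _ _ _ hS₁c ht, card_compl,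
    card_sdiff_of_subset hS₁]
  have := card_le_card hS₁
  have := card_le_univ S
  congr 1
  omega

theorem card_sigma_powerset_powersetCard_le (n k : ℕ) :
    #((powersetCard k (univ : Finset (Fin n))).sigma powerset) ≤ (2 * n) ^ k := by
  rw [card_sigma, sum_congr rfl fun S hS => by rw [card_powerset, mem_powersetCard_univ.1 hS],
    sum_const, card_powersetCard, card_univ, Fintype.card_fin, smul_eq_mul, mul_pow, mul_comm]
  exact Nat.mul_le_mul_left _ (Nat.choose_le_pow n k)

/-- The union bound, phrased by counting `m`-tuples of elements of `𝒯`: the tuples missing a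
fixed `p` make up a proportion at most `(1 - q)^m` of them. -/
theorem exists_subset_card_le_of_card_mul_one_sub_pow_lt_one {β ι : Type*} [DecidableEq β]
    {𝒯 : Finset β} (h𝒯 : 𝒯.Nonempty) {P : Finset ι} (good : ι → β → Prop)
    [∀ p, DecidablePred (good p)] {q : ℝ} {m : ℕ}
    (hgood : ∀ p ∈ P, q * #𝒯 ≤ #{R ∈ 𝒯 | good p R}) (hP : #P * (1 - q) ^ m < 1) :
    ∃ G ⊆ 𝒯, #G ≤ m ∧ ∀ p ∈ P, ∃ R ∈ G, good p R := by
  by_contra! hmiss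
  have hcover : Fintype.piFinset (fun _ : Fin m => 𝒯) ⊆
      P.biUnion fun p => Fintype.piFinset fun _ => {R ∈ 𝒯 | ¬ good p R} := by
    intro g hg
    rw [Fintype.mem_piFinset] at hg
    obtain ⟨p, hp, hbad⟩ := hmiss (univ.image g) (by simpa [image_subset_iff] using hg)
      (card_image_le.trans (by simp))
    simp only [mem_biUnion, Fintype.mem_piFinset, mem_filter]
    exact ⟨p, hp, fun i => ⟨hg i, hbad _ (mem_image_of_mem g (mem_univ i))⟩⟩
  have hbad : ∀ p ∈ P, (#{R ∈ 𝒯 | ¬ good p R} : ℝ) ≤ (1 - q) * #𝒯 := by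
    intro p hp
    have hsplit : (#{R ∈ 𝒯 | good p R} : ℝ) + #{R ∈ 𝒯 | ¬ good p R} = #𝒯 := by
      exact_mod_cast card_filter_add_card_filter_not (s := 𝒯) (p := good p)
    linarith [hgood p hp]
  have hcard := (card_le_card hcover).trans card_biUnion_le
  simp only [Fintype.card_piFinset, prod_const, card_univ, Fintype.card_fin] at hcard
  have h𝒯pos : (0 : ℝ) < #𝒯 := by exact_mod_cast h𝒯.card_pos
  have : ((#𝒯 : ℕ) : ℝ) ^ m < #𝒯 ^ m := calc
    ((#𝒯 : ℕ) : ℝ) ^ m ≤ ∑ p ∈ P, (#{R ∈ 𝒯 | ¬ good p R} : ℝ) ^ m := by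
        exact_mod_cast hcard
    _ ≤ ∑ p ∈ P, ((1 - q) * #𝒯) ^ m := by
        gcongr with p hp
        exact hbad p hp
    _ = #P * (1 - q) ^ m * #𝒯 ^ m := by rw [sum_const, nsmul_eq_mul, mul_pow, mul_assoc]
    _ < #𝒯 ^ m := by nlinarith [pow_pos h𝒯pos m]
  exact lt_irrefl _ this

def indicatorFin2 {n : ℕ} (R : Finset (Fin n)) : Fin n → Fin 2 :=
  fun x => if x ∈ R then 1 else 0

theorem filter_indicatorFin2_eq_one {n : ℕ} (R : Finset (Fin n)) :
    univ.filter (fun x => indicatorFin2 R x = 1) = R := by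
  ext x
  by_cases hx : x ∈ R <;> simp [indicatorFin2, hx]

theorem exists_isUniversalSet_card_le {α : ℝ} (hα0 : 0 < α) (hα : α ≤ 1 / 2) {n k m : ℕ}
    (hk : 2 * k ^ 2 ≤ α * n) (hm : ((2 * n : ℕ) : ℝ) ^ k * (1 - α ^ k / 2) ^ m < 1) :
    ∃ F, IsUniversalSet n k α F ∧ #F ≤ m := by
  set t := ⌈α * n⌉₊
  have htn : t ≤ n := by
    have := Nat.ceil_lt_add_one (by positivity : 0 ≤ α * n)
    exact Nat.lt_add_one_iff.1 (by exact_mod_cast (by nlinarith : (t : ℝ) < n + 1))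
  have hkt : k ≤ t := by
    have : (k : ℝ) ≤ k ^ 2 := by exact_mod_cast Nat.le_self_pow two_ne_zero k
    exact_mod_cast (by nlinarith [Nat.le_ceil (α * n)] : (k : ℝ) ≤ t)
  set P := (powersetCard k (univ : Finset (Fin n))).sigma powerset
  have hgood : ∀ p ∈ P, α ^ k / 2 * #(powersetCard t (univ : Finset (Fin n))) ≤
      #{R ∈ powersetCard t (univ : Finset (Fin n)) | R ∩ p.1 = p.2} := by
    rintro ⟨S, S₁⟩ hp
    simp only [P, mem_sigma, mem_powersetCard_univ, mem_powerset] at hp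
    obtain ⟨hS, hS₁⟩ := hp
    have hS₁k := hS ▸ card_le_card hS₁
    rw [card_filter_powersetCard_inter_eq hS₁ (hS₁k.trans hkt), card_powersetCard, card_univ,
      Fintype.card_fin, hS]
    exact pow_div_two_mul_choose_ceil_le hα hS₁k hk
  have hP : #P * (1 - α ^ k / 2) ^ m < 1 := by
    have : α ^ k ≤ 1 := pow_le_one₀ hα0.le (by linarith)
    refine lt_of_le_of_lt ?_ hm
    gcongr
    · exact pow_nonneg (by linarith) m
    · exact_mod_cast card_sigma_powerset_powersetCard_le n k
  obtain ⟨G, hG, hGm, hGcover⟩ := exists_subset_card_le_of_card_mul_one_sub_pow_lt_one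
    (powersetCard_nonempty.2 (by simpa using htn)) _ hgood hP
  refine ⟨G.image indicatorFin2, ⟨?_, ?_⟩, card_image_le.trans hGm⟩
  · simp only [mem_image, forall_exists_index, and_imp]
    rintro _ R hR rfl
    rw [filter_indicatorFin2_eq_one]
    exact mem_powersetCard_univ.1 (hG hR)
  · intro S₀ S₁ hd hcard
    obtain ⟨R, hRG, hR⟩ := hGcover ⟨S₀ ∪ S₁, S₁⟩ <| mem_sigma.2
      ⟨by simp [card_union_of_disjoint hd, hcard], mem_powerset.2 subset_union_right⟩
    change R ∩ (S₀ ∪ S₁) = S₁ at hR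
    refine ⟨indicatorFin2 R, mem_image_of_mem _ hRG, fun x hx => ?_, fun x hx => ?_⟩
    · have : x ∉ R := fun hxR =>
        disjoint_left.1 hd hx (hR ▸ mem_inter.2 ⟨hxR, mem_union_left _ hx⟩)
      simp [indicatorFin2, this]
    · have : x ∈ R := (mem_inter.1 (hR.symm ▸ hx)).1
      simp [indicatorFin2, this]

theorem mul_one_sub_pow_lt_one_of_log_lt {N q : ℝ} {m : ℕ} (hN : 0 < N) (hq : q ≤ 1)
    (h : Real.log N < q * m) : N * (1 - q) ^ m < 1 := by
  calc N * (1 - q) ^ m ≤ Real.exp (Real.log N) * Real.exp (-q) ^ m := by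
        rw [Real.exp_log hN]
        gcongr
        exact Real.one_sub_le_exp_neg q
    _ = Real.exp (Real.log N - q * m) := by
        rw [← Real.exp_nat_mul, ← Real.exp_add]; ring_nf
    _ < 1 := Real.exp_lt_one_iff.2 (by linarith)

theorem log_two_mul_pow_lt {n : ℕ} (hn : 2 ≤ n) {k : ℕ} (hk : 1 ≤ k) :
    Real.log (((2 * n : ℕ) : ℝ) ^ k) < 2 * k * Real.logb 2 n := by
  have hn' : (2 : ℝ) ≤ n := by exact_mod_cast hn
  have hlogn : 0 < Real.log n := Real.log_pos (by linarith)
  have hlog2 : Real.log n < Real.logb 2 n := by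
    rw [Real.logb, lt_div_iff₀ (Real.log_pos one_lt_two)]
    nlinarith [Real.log_two_lt_d9]
  have hk' : (1 : ℝ) ≤ k := by exact_mod_cast hk
  calc Real.log (((2 * n : ℕ) : ℝ) ^ k) = k * Real.log (2 * n) := by
        push_cast; rw [Real.log_pow]
    _ ≤ k * Real.log (n ^ 2) := by gcongr; nlinarith
    _ = 2 * k * Real.log n := by rw [Real.log_pow]; push_cast; ring
    _ < 2 * k * Real.logb 2 n := by gcongr

theorem ceil_le_inv_pow_mul_rpow_mul {α L : ℝ} (hα0 : 0 < α) (hα1 : α ≤ 1) {k : ℕ}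
    (hk : 3 ≤ k) (hL : 1 ≤ L) :
    (⌈4 * k * L / α ^ k⌉₊ : ℝ) ≤
      (1 / α) ^ k * (k : ℝ) ^ (3 * (k : ℝ) ^ ((5 : ℝ) / 6)) * L := by
  have hk' : (3 : ℝ) ≤ k := by exact_mod_cast hk
  have hαk : 0 < α ^ k := pow_pos hα0 k
  have hαk1 : α ^ k ≤ 1 := pow_le_one₀ hα0.le hα1
  have h5k : 5 * (k : ℝ) ≤ (k : ℝ) ^ (3 * (k : ℝ) ^ ((5 : ℝ) / 6)) := calc
    5 * (k : ℝ) ≤ (k : ℝ) ^ (3 : ℝ) := by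
        rw [show (3 : ℝ) = (3 : ℕ) by norm_num, Real.rpow_natCast]
        nlinarith [mul_le_mul hk' hk' (by norm_num) (by linarith : (0 : ℝ) ≤ k)]
    _ ≤ (k : ℝ) ^ (3 * (k : ℝ) ^ ((5 : ℝ) / 6)) := by
        have := Real.one_le_rpow (by linarith : (1 : ℝ) ≤ k) (by norm_num : (0 : ℝ) ≤ 5 / 6)
        gcongr
        · linarith
        · linarith
  have hone : 1 ≤ k * L / α ^ k := by
    rw [le_div_iff₀ hαk]; nlinarith
  calc (⌈4 * k * L / α ^ k⌉₊ : ℝ) ≤ 4 * k * L / α ^ k + 1 :=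
        (Nat.ceil_lt_add_one (by positivity)).le
    _ ≤ 5 * k * L / α ^ k := by
        have : 5 * k * L / α ^ k = 4 * k * L / α ^ k + k * L / α ^ k := by ring
        linarith
    _ = (1 / α) ^ k * (5 * k) * L := by rw [one_div_pow]; ring
    _ ≤ (1 / α) ^ k * (k : ℝ) ^ (3 * (k : ℝ) ^ ((5 : ℝ) / 6)) * L := by gcongr

/-- For every `0 < α ≤ 1/2` there are `C > 0` and `K` such that for all `k ≥ K` and
`n ≥ 4·k⁶`, there is an `(n,k,α)`-universal set of size at most
`(1/α)^k · k^{C·k^{5/6}} · log n`. -/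
theorem uniform_universal_set (α : ℝ) (hα0 : 0 < α) (hα1 : α ≤ 1 / 2) :
    ∃ C : ℝ, 0 < C ∧ ∃ K : ℕ, ∀ k : ℕ, K ≤ k → ∀ n : ℕ, 4 * k ^ 6 ≤ n →
      ∃ F : Finset (Fin n → Fin 2),
        IsUniversalSet n k α F ∧
          (F.card : ℝ) ≤
            (1 / α) ^ k * (k : ℝ) ^ (C * (k : ℝ) ^ ((5 : ℝ) / 6)) *
              Real.logb 2 n := by
  refine ⟨3, by norm_num, ⌈1 / α⌉₊ + 3, fun k hk n hn => ?_⟩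
  have hk3 : (3 : ℝ) ≤ k := by exact_mod_cast (by omega : 3 ≤ k)
  have hαk : 1 ≤ α * k := by
    have := (Nat.le_ceil (1 / α)).trans
      (by exact_mod_cast (by omega : ⌈1 / α⌉₊ ≤ k) : _ ≤ (k : ℝ))
    rwa [div_le_iff₀ hα0, mul_comm] at this
  have hn' : 4 * (k : ℝ) ^ 6 ≤ n := by exact_mod_cast hn
  have hkn : 2 * (k : ℝ) ^ 2 ≤ α * n := by
    have : (k : ℝ) ^ 2 ≤ k ^ 5 := pow_le_pow_right₀ (by linarith) (by norm_num)
    nlinarith [pow_pos (by linarith : (0 : ℝ) < k) 5]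
  have hn2 : 2 ≤ n := by exact_mod_cast (by nlinarith : (2 : ℝ) ≤ n)
  have hL : 1 ≤ Real.logb 2 n := by
    rw [Real.le_logb_iff_rpow_le one_lt_two (by positivity), Real.rpow_one]; exact_mod_cast hn2
  set m := ⌈4 * k * Real.logb 2 n / α ^ k⌉₊
  have hqm : 2 * k * Real.logb 2 n ≤ α ^ k / 2 * m := by
    have := Nat.le_ceil (4 * k * Real.logb 2 n / α ^ k)
    rw [div_le_iff₀ (pow_pos hα0 k)] at this
    linarith
  have hq : α ^ k / 2 ≤ 1 := by
    linarith [pow_le_one₀ hα0.le (by linarith : α ≤ 1) (n := k)]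
  obtain ⟨F, hF, hFm⟩ := exists_isUniversalSet_card_le hα0 hα1 hkn
    (mul_one_sub_pow_lt_one_of_log_lt (by positivity) hq
      ((log_two_mul_pow_lt hn2 (by omega)).trans_le hqm))
  exact ⟨F, hF, (Nat.cast_le.2 hFm).trans
    (ceil_le_inv_pow_mul_rpow_mul hα0 (by linarith) (by omega) hL)⟩
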